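/- arXiv:math/0508112 — 2 statements merged into one kernel-verified Lean document; each statement's English description precedes it below -/
import Mathlib

section
/- If π is chosen uniformly from permutations of {1,...,n} with exactly d descents (0 ≤ d ≤ n-1), then the expected value of π(n) is n-d. -/
open Finset

/-- Number of descents of a permutation of `Fin n` (positions `i` with `π(i) > π(i+1)`). -/
def descents (n : ℕ) (π : Equiv.Perm (Fin n)) : ℕ :=
  (Finset.univ.filter (fun i : Fin n =>
    ∃ j : Fin n, (j : ℕ) = (i : ℕ) + 1 ∧ π j < π i)).card

/-- `A n d k` : number of permutations of `{1,…,n}` with exactly `d` descents and first value `k`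
(1-based values; `d : ℤ`, so `A n d k = 0` when `d < 0`). -/
def A (n : ℕ) (d : ℤ) (k : ℕ) : ℕ :=
  (Finset.univ.filter (fun π : Equiv.Perm (Fin n) =>
    (descents n π : ℤ) = d ∧ ∃ i : Fin n, (i : ℕ) = 0 ∧ (π i : ℕ) + 1 = k)).card

/-- `Alast n d k` : number with `d` descents and last value `k`. -/
def Alast (n : ℕ) (d : ℤ) (k : ℕ) : ℕ :=
  (Finset.univ.filter (fun π : Equiv.Perm (Fin n) =>
    (descents n π : ℤ) = d ∧ ∃ i : Fin n, (i : ℕ) + 1 = n ∧ (π i : ℕ) + 1 = k)).card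

/-- Eulerian number: permutations of `{1,…,n}` with `d` descents. -/
def Eul (n : ℕ) (d : ℤ) : ℕ :=
  (Finset.univ.filter (fun π : Equiv.Perm (Fin n) => (descents n π : ℤ) = d)).card

/-!
Inserting the new largest letter `n + 1` into `σ ∈ S_n` at each of the `n + 1` slots produces
every permutation of `S_{n+1}` exactly once. At the end it creates no descent and becomes the
last letter; right after one of the `des σ` descents it creates no descent either; in each of
the remaining `n - des σ` slots it creates exactly one; in these last two cases the last letter
is unchanged. Consequently, for every weight `w`, the sum
`∑_{τ ∈ S_{n+1}} w(des τ) (τ(n+1) + des τ - (n+1))` equals the analogous sum over `S_n` for the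
weight `D ↦ D w(D) + (n - D) w(D + 1)`, so by induction it vanishes. Taking for `w` the indicator
of `d` shows that `π(n)` has mean `n - d` on the permutations with `d` descents.
-/

open Equiv

section Descents

variable {α : Type*} [LinearOrder α] {k : ℕ}

def descentCount (f : Fin (k + 1) → α) : ℕ :=
  #{i : Fin k | f i.succ < f i.castSucc}

lemma descentCount_eq_sum (f : Fin (k + 1) → α) :
    descentCount f = ∑ i : Fin k, if f i.succ < f i.castSucc then 1 else 0 :=
  card_filter _ _

lemma descentCount_le (f : Fin (k + 1) → α) : descentCount f ≤ k :=
  (card_filter_le _ _).trans_eq (card_fin k)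

lemma descentCount_comp_strictMono {β : Type*} [LinearOrder β] {g : α → β} (hg : StrictMono g)
    (f : Fin (k + 1) → α) : descentCount (g ∘ f) = descentCount f := by
  simp only [descentCount, Function.comp_apply, hg.lt_iff_lt]

lemma descentCount_snoc {x : α} (f : Fin (k + 1) → α) (hx : ∀ i, f i < x) :
    descentCount (Fin.snoc f x : Fin (k + 2) → α) = descentCount f := by
  rw [descentCount_eq_sum, descentCount_eq_sum, Fin.sum_univ_castSucc]
  simp only [Fin.succ_castSucc, Fin.snoc_castSucc, Fin.succ_last, Fin.snoc_last,
    (hx _).not_gt, if_false, add_zero]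

lemma descentCount_cons {x : α} (f : Fin (k + 1) → α) (hx : ∀ i, f i < x) :
    descentCount (Fin.cons x f : Fin (k + 2) → α) = descentCount f + 1 := by
  rw [descentCount_eq_sum, descentCount_eq_sum, Fin.sum_univ_succ, add_comm]
  simp only [Fin.castSucc_succ, Fin.cons_succ, Fin.castSucc_zero, Fin.succ_zero_eq_one,
    Fin.cons_zero, Fin.cons_one, hx, if_true]

lemma succAbove_succ_eq_succAbove_castSucc {n : ℕ} {i j : Fin n} (h : i ≠ j) :
    j.succ.succAbove i = j.castSucc.succAbove i := by
  rcases h.lt_or_gt with h | h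
  · rw [Fin.succAbove_succ_of_le _ _ h.le, Fin.succAbove_castSucc_of_lt _ _ h]
  · rw [Fin.succAbove_succ_of_lt _ _ h, Fin.succAbove_castSucc_of_le _ _ h.le]

lemma descentCount_insertNth_succ {x : α} (f : Fin (k + 1) → α) (hx : ∀ i, f i < x)
    (j : Fin k) :
    descentCount (Fin.insertNth j.succ.castSucc x f) + (if f j.succ < f j.castSucc then 1 else 0) =
      descentCount f + 1 := by
  set τ : Fin (k + 2) → α := Fin.insertNth j.succ.castSucc x f
  have hτ (i : Fin (k + 1)) : τ (j.succ.castSucc.succAbove i) = f i :=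
    Fin.insertNth_apply_succAbove _ _ _ _
  have hτx : τ j.succ.castSucc = x := Fin.insertNth_apply_same _ _ _
  have hpair (i : Fin k) (hi : i ≠ j) : τ (j.succ.succAbove i).succ = f i.succ ∧
      τ (j.succ.succAbove i).castSucc = f i.castSucc := by
    rw [← Fin.castSucc_succAbove_castSucc, succAbove_succ_eq_succAbove_castSucc hi,
      ← Fin.succ_succAbove_succ, ← Fin.castSucc_succ]
    exact ⟨hτ _, hτ _⟩
  have hnew : τ j.succ.succ = f j.succ := by
    rw [← Fin.succAbove_castSucc_self, hτ]
  have hold : τ j.castSucc.castSucc = f j.castSucc := by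
    rw [← Fin.succAbove_castSucc_of_lt _ _ Fin.castSucc_lt_succ, hτ]
  have hrest : ∑ i ∈ univ.erase j,
      (if τ (j.succ.succAbove i).succ < τ (j.succ.succAbove i).castSucc then 1 else 0) =
      ∑ i ∈ univ.erase j, if f i.succ < f i.castSucc then 1 else 0 :=
    sum_congr rfl fun i hi => by
      rw [(hpair i (ne_of_mem_erase hi)).1, (hpair i (ne_of_mem_erase hi)).2]
  rw [descentCount_eq_sum, descentCount_eq_sum, Fin.sum_univ_succAbove _ j.succ,
    ← add_sum_erase _ _ (mem_univ j), ← add_sum_erase _ _ (mem_univ j), hrest]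
  simp only [Fin.succAbove_succ_self, ← Fin.castSucc_succ, hτx, hnew, hold, hx, (hx _).not_gt,
    if_true, if_false]
  ring

end Descents

section InsertMax

variable {N : ℕ}

def insertMax (σ : Perm (Fin N)) (p : Fin (N + 1)) : Perm (Fin (N + 1)) :=
  ((finSuccEquiv' p).trans (optionCongr σ)).trans (finSuccEquiv' (Fin.last N)).symm

lemma coe_insertMax (σ : Perm (Fin N)) (p : Fin (N + 1)) :
    ⇑(insertMax σ p) = Fin.insertNth p (Fin.last N) (Fin.castSucc ∘ σ) := by
  ext i
  induction i using Fin.succAboveCases p with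
  | x => simp [insertMax]
  | p j => simp [insertMax]

@[simp]
lemma insertMax_apply_self (σ : Perm (Fin N)) (p : Fin (N + 1)) :
    insertMax σ p p = Fin.last N := by
  simp [coe_insertMax]

@[simp]
lemma insertMax_apply_succAbove (σ : Perm (Fin N)) (p : Fin (N + 1)) (j : Fin N) :
    insertMax σ p (p.succAbove j) = (σ j).castSucc := by
  simp [coe_insertMax]

lemma insertMax_injective :
    Function.Injective (fun x : Perm (Fin N) × Fin (N + 1) => insertMax x.1 x.2) := by
  rintro ⟨σ, p⟩ ⟨σ', p'⟩ (h : insertMax σ p = insertMax σ' p')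
  obtain rfl : p = p' := (insertMax σ p).injective <| by
    rw [insertMax_apply_self, h, insertMax_apply_self]
  refine Prod.ext (Equiv.ext fun j => ?_) rfl
  simpa using congrArg (· (p.succAbove j)) h

lemma insertMax_bijective :
    Function.Bijective (fun x : Perm (Fin N) × Fin (N + 1) => insertMax x.1 x.2) := by
  rw [Fintype.bijective_iff_injective_and_card]
  refine ⟨insertMax_injective, ?_⟩
  simp [Fintype.card_perm, Nat.factorial_succ, mul_comm]

lemma sum_perm_succ {R : Type*} [AddCommMonoid R] (g : Perm (Fin (N + 1)) → R) :
    ∑ τ, g τ = ∑ σ : Perm (Fin N), ∑ p, g (insertMax σ p) := by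
  rw [← insertMax_bijective.sum_comp, Fintype.sum_prod_type]

end InsertMax

section InsertMaxDescents

variable {M : ℕ} (σ : Perm (Fin (M + 1)))

lemma descentCount_insertMax_last :
    descentCount ⇑(insertMax σ (Fin.last (M + 1))) = descentCount ⇑σ := by
  rw [coe_insertMax, Fin.insertNth_last',
    descentCount_snoc (Fin.castSucc ∘ σ) fun _ => Fin.castSucc_lt_last _,
    descentCount_comp_strictMono Fin.strictMono_castSucc]

lemma descentCount_insertMax_zero : descentCount ⇑(insertMax σ 0) = descentCount ⇑σ + 1 := by
  rw [coe_insertMax, Fin.insertNth_zero',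
    descentCount_cons (Fin.castSucc ∘ σ) fun _ => Fin.castSucc_lt_last _,
    descentCount_comp_strictMono Fin.strictMono_castSucc]

lemma descentCount_insertMax_succ (j : Fin M) :
    descentCount ⇑(insertMax σ j.succ.castSucc) + (if σ j.succ < σ j.castSucc then 1 else 0) =
      descentCount ⇑σ + 1 := by
  have := descentCount_insertNth_succ (Fin.castSucc ∘ σ) (fun _ => Fin.castSucc_lt_last _) j
  simpa only [descentCount_comp_strictMono Fin.strictMono_castSucc, Function.comp_apply,
    Fin.castSucc_lt_castSucc_iff, ← coe_insertMax] using this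

lemma insertMax_castSucc_apply_last (p : Fin (M + 1)) :
    insertMax σ p.castSucc (Fin.last (M + 1)) = (σ (Fin.last M)).castSucc := by
  rw [← Fin.succ_last, ← Fin.succAbove_castSucc_of_le _ _ (Fin.le_last p),
    insertMax_apply_succAbove]

lemma sum_insertMax {R : Type*} [AddCommMonoid R] (F : ℕ → ℕ → R) :
    ∑ p, F (descentCount ⇑(insertMax σ p)) (insertMax σ p (Fin.last (M + 1))) =
      F (descentCount ⇑σ) (M + 1) + descentCount ⇑σ • F (descentCount ⇑σ) (σ (Fin.last M)) +
        (M + 1 - descentCount ⇑σ) • F (descentCount ⇑σ + 1) (σ (Fin.last M)) := by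
  set D := descentCount ⇑σ
  have hD : D ≤ M := descentCount_le _
  have hslot (j : Fin M) : descentCount ⇑(insertMax σ j.succ.castSucc) =
      if σ j.succ < σ j.castSucc then D else D + 1 := by
    have := descentCount_insertMax_succ σ j
    split_ifs at this ⊢ <;> omega
  have hascents : #{j : Fin M | ¬σ j.succ < σ j.castSucc} = M - D := by
    have := card_filter_add_card_filter_not (s := univ)
      (fun j : Fin M => σ j.succ < σ j.castSucc)
    rw [card_univ, Fintype.card_fin] at this
    change D + _ = M at this
    omega
  rw [Fin.sum_univ_castSucc, Fin.sum_univ_succ, insertMax_castSucc_apply_last]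
  simp only [insertMax_castSucc_apply_last, Fin.val_castSucc, Fin.castSucc_zero,
    descentCount_insertMax_zero, hslot, apply_ite F, ite_apply, sum_ite, sum_const, hascents,
    insertMax_apply_self, Fin.val_last, descentCount_insertMax_last]
  change F (D + 1) _ + (D • _ + _) + F D _ = _
  rw [Nat.sub_add_comm hD, succ_nsmul]
  abel

end InsertMaxDescents

-- Values are 0-based and `n = M + 1`, so `(τ (Fin.last M) : ℤ) - M` is `τ(n) - n`.
theorem sum_mul_val_last_add_descentCount_sub_eq_zero (M : ℕ) (w : ℕ → ℤ) :
    ∑ τ : Perm (Fin (M + 1)),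
      w (descentCount ⇑τ) * ((τ (Fin.last M) : ℤ) + descentCount ⇑τ - M) = 0 := by
  induction M generalizing w with
  | zero => simp [descentCount]
  | succ M ih =>
    rw [sum_perm_succ, ← ih fun D => D * w D + (M + 1 - D : ℕ) * w (D + 1)]
    refine sum_congr rfl fun σ _ => ?_
    rw [sum_insertMax σ fun D v => w D * ((v : ℤ) + D - (M + 1 : ℕ))]
    simp only [nsmul_eq_mul]
    push_cast
    ring

def permsWithDescents (M d : ℕ) : Finset (Perm (Fin (M + 1))) := {π | descentCount ⇑π = d}

lemma sum_val_last_add_one_permsWithDescents {M d : ℕ} (hd : d ≤ M + 1) :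
    ∑ π ∈ permsWithDescents M d, ((π (Fin.last M) : ℕ) + 1) =
      (M + 1 - d) * #(permsWithDescents M d) := by
  have key := sum_mul_val_last_add_descentCount_sub_eq_zero M fun D => if D = d then 1 else 0
  simp only [ite_mul, one_mul, zero_mul, ← sum_filter] at key
  change ∑ π ∈ permsWithDescents M d, _ = 0 at key
  rw [card_eq_sum_ones, mul_sum]
  zify [hd]
  rw [← sub_eq_zero, ← sum_sub_distrib, ← key]
  refine sum_congr rfl fun π hπ => ?_
  rw [(mem_filter.1 hπ).2]
  ring

lemma descents_eq_descentCount {M : ℕ} (π : Perm (Fin (M + 1))) :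
    descents (M + 1) π = descentCount ⇑π := by
  rw [descents, descentCount, eq_comm, ← card_map Fin.castSuccEmb]
  refine congrArg card (ext fun i => ?_)
  induction i using Fin.lastCases with
  | last =>
    simp only [mem_filter, mem_univ, true_and, mem_map, Fin.castSuccEmb_apply, Fin.ext_iff,
      Fin.val_castSucc, Fin.val_last]
    constructor
    · rintro ⟨j, -, hj⟩
      omega
    · rintro ⟨j, hj, -⟩
      omega
  | cast i =>
    simp only [mem_filter, mem_univ, true_and, mem_map, Fin.castSuccEmb_apply,
      Fin.castSucc_inj, exists_eq_right]
    refine ⟨fun h => ⟨i.succ, rfl, h⟩, fun ⟨j, hj, h⟩ => ?_⟩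
    rwa [show j = i.succ from Fin.ext hj] at h

lemma Eul_eq_card (M d : ℕ) : Eul (M + 1) d = #(permsWithDescents M d) := by
  simp [Eul, permsWithDescents, descents_eq_descentCount]

lemma Alast_eq_card (M d k : ℕ) :
    Alast (M + 1) d k = #{π ∈ permsWithDescents M d | (π (Fin.last M) : ℕ) + 1 = k} := by
  rw [Alast, permsWithDescents, filter_filter]
  refine congrArg card (filter_congr fun π _ => ?_)
  rw [descents_eq_descentCount, Nat.cast_inj]
  refine and_congr_right' ⟨fun ⟨i, hi, hk⟩ => ?_, fun hk => ⟨Fin.last M, rfl, hk⟩⟩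
  rwa [show i = Fin.last M from Fin.ext (by simp; omega)] at hk

lemma sum_mul_Alast (M d : ℕ) :
    ∑ k ∈ Icc 1 (M + 1), k * Alast (M + 1) d k =
      ∑ π ∈ permsWithDescents M d, ((π (Fin.last M) : ℕ) + 1) := by
  rw [eq_comm, ← sum_fiberwise_of_maps_to (t := Icc 1 (M + 1))
    fun π _ => mem_Icc.2 ⟨le_add_self, (π (Fin.last M)).isLt⟩]
  refine sum_congr rfl fun k _ => ?_
  rw [Alast_eq_card, sum_congr rfl fun π hπ => (mem_filter.1 hπ).2, sum_const, smul_eq_mul,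
    mul_comm]

theorem stmt8 (n : ℕ) (hn : 1 ≤ n) (d : ℕ) (hd : d ≤ n - 1) :
    ∑ k ∈ Finset.Icc 1 n, k * Alast n (d : ℤ) k = (n - d) * Eul n (d : ℤ) := by
  obtain ⟨M, rfl⟩ := Nat.exists_eq_add_of_le' hn
  rw [sum_mul_Alast, Eul_eq_card, sum_val_last_add_one_permsWithDescents (by omega)]
end

section
/- For 0 ≤ d ≤ n-1 and m ≥ 1, A(n,d)·E[π(1)^{\overline{m}}] = m! Σ_{j≥0} (-1)^{d-j} C(n, d-j) Σ_{ℓ=0}^{n-1} C(m+n, ℓ) j^{ℓ}, where x^{\overline{m}} = x(x+1)···(x+m-1) and E is over π uniform on permutations with d descents. -/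
open Finset

/-!
For `π ∈ S_{n+1}` (values `0, …, n`) put `F_{n,m}(t) = ∑_π C(π(0)+m, m) t^{des π}`; since
`∏_{i<m} (k+i) = m! C(k+m-1, m)`, the left-hand side is `m! [t^d] F_{n-1,m}`.
Splitting off the first value `c` and relabelling the remaining values order-preservingly is a
bijection `S_{n+2} ≃ [n+2] × S_{n+1}`, and position `0` becomes a descent exactly when `c`
exceeds the new first value. The hockey-stick identity then gives
`F_{n+1,m} = C(n+m+2, m+1) t F_{n,0} + (1 - t) F_{n,m+1}`, with `F_{0,m} = 1`.
The series `(1 - t)^n ∑_j T_{n,m}(j) t^j`, `T_{n,m}(j) = ∑_{ℓ<n} C(m+n, ℓ) j^ℓ`, satisfies the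
same recurrence (because `T_{n,0}(j) = (j+1)^n - j^n`), and its `d`-th coefficient is the
right-hand side.
-/

open PowerSeries

def permCons {N : ℕ} (c : Fin (N + 1)) (σ : Equiv.Perm (Fin N)) : Equiv.Perm (Fin (N + 1)) :=
  ((finSuccEquiv' 0).trans (Equiv.optionCongr σ)).trans (finSuccEquiv' c).symm

@[simp] lemma permCons_zero {N : ℕ} (c : Fin (N + 1)) (σ : Equiv.Perm (Fin N)) :
    permCons c σ 0 = c := by
  simp [permCons]

@[simp] lemma permCons_succ {N : ℕ} (c : Fin (N + 1)) (σ : Equiv.Perm (Fin N)) (i : Fin N) :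
    permCons c σ i.succ = c.succAbove (σ i) := by
  simp [permCons, finSuccEquiv'_zero]

lemma permCons_bijective (N : ℕ) :
    Function.Bijective (fun p : Fin (N + 1) × Equiv.Perm (Fin N) => permCons p.1 p.2) := by
  refine (Fintype.bijective_iff_injective_and_card _).mpr ⟨?_, ?_⟩
  · rintro ⟨c, σ⟩ ⟨c', σ'⟩ h
    have hc : c = c' := by simpa using congr($h 0)
    subst hc
    refine Prod.ext rfl (Equiv.ext fun i => (Fin.succAbove_right_injective (p := c)) ?_)
    simpa using congr($h i.succ)
  · simp [Fintype.card_perm, Nat.factorial_succ]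

lemma descents_succ_eq_sum (n : ℕ) (π : Equiv.Perm (Fin (n + 1))) :
    descents (n + 1) π = ∑ i : Fin n, if π i.succ < π i.castSucc then 1 else 0 := by
  have hlast : ¬∃ j : Fin (n + 1), (j : ℕ) = n + 1 ∧ π j < π (Fin.last n) :=
    fun ⟨j, hj, _⟩ => by omega
  have hsucc (i : Fin n) :
      (∃ j : Fin (n + 1), (j : ℕ) = i + 1 ∧ π j < π i.castSucc) ↔ π i.succ < π i.castSucc :=
    ⟨fun ⟨j, hj, h⟩ => by rwa [show j = i.succ from Fin.ext hj] at h, fun h => ⟨i.succ, rfl, h⟩⟩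
  rw [descents, card_filter, Fin.sum_univ_castSucc]
  simp only [Fin.val_castSucc, Fin.val_last, hsucc, hlast, if_false, add_zero]

lemma descents_permCons {N : ℕ} (c : Fin (N + 2)) (σ : Equiv.Perm (Fin (N + 1))) :
    descents (N + 2) (permCons c σ)
      = (if (σ 0).castSucc < c then 1 else 0) + descents (N + 1) σ := by
  rw [descents_succ_eq_sum, descents_succ_eq_sum, Fin.sum_univ_succ]
  simp only [permCons_succ, Fin.castSucc_zero, permCons_zero, ← Fin.succ_castSucc]
  simp [Fin.succAbove_lt_iff_castSucc_lt, Fin.succAbove_lt_succAbove_iff]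

lemma sum_range_choose_mul_ite_lt {R : Type*} [CommRing R] {s t : ℕ} (hst : s ≤ t) (m : ℕ)
    (x : R) :
    ∑ c ∈ range (t + 1), ((c + m).choose m : R) * (if s < c then x else 1)
      = ((t + m + 1).choose (m + 1) : R) * x + ((s + m + 1).choose (m + 1) : R) * (1 - x) := by
  have hsplit (c : ℕ) : ((c + m).choose m : R) * (if s < c then x else 1)
      = ((c + m).choose m : R) * x + if c < s + 1 then ((c + m).choose m : R) * (1 - x) else 0 := by
    split_ifs <;> first | omega | ring
  have hfilter : (range (t + 1)).filter (· < s + 1) = range (s + 1) := by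
    ext c; simp only [mem_filter, mem_range]; omega
  rw [sum_congr rfl fun c _ => hsplit c, sum_add_distrib, ← sum_mul, ← sum_filter, hfilter,
    ← sum_mul]
  simp only [← Nat.cast_sum, Nat.sum_range_add_choose]

lemma sum_fin_choose_mul_ite_lt {R : Type*} [CommRing R] {N : ℕ} (s : Fin (N + 1)) (m : ℕ)
    (x : R) :
    ∑ c : Fin (N + 2), (((c : ℕ) + m).choose m : R) * (if s.castSucc < c then x else 1)
      = ((N + m + 2).choose (m + 1) : R) * x + ((s + m + 1).choose (m + 1) : R) * (1 - x) := by
  simp only [Fin.lt_def, Fin.val_castSucc]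
  rw [Fin.sum_univ_eq_sum_range (fun c => ((c + m).choose m : R) * if (s : ℕ) < c then x else 1)]
  rw [show N + m + 2 = N + 1 + m + 1 by ring]
  exact sum_range_choose_mul_ite_lt (s.is_le.trans N.le_succ) m x

noncomputable def descentSeries (n m : ℕ) : ℤ⟦X⟧ :=
  ∑ π : Equiv.Perm (Fin (n + 1)), (((π 0 : ℕ) + m).choose m : ℤ⟦X⟧) * X ^ descents (n + 1) π

lemma descentSeries_zero (m : ℕ) : descentSeries 0 m = 1 := by
  simp [descentSeries, descents_succ_eq_sum]

lemma descentSeries_succ (n m : ℕ) :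
    descentSeries (n + 1) m = ((n + m + 2).choose (m + 1) : ℤ⟦X⟧) * X * descentSeries n 0
      + (1 - X) * descentSeries n (m + 1) := by
  unfold descentSeries
  rw [← (permCons_bijective (n + 1)).sum_comp, Fintype.sum_prod_type_right]
  simp only [permCons_zero, descents_permCons, pow_add, pow_ite, pow_one, pow_zero, ← mul_assoc,
    ← sum_mul, sum_fin_choose_mul_ite_lt, mul_sum, ← sum_add_distrib]
  refine sum_congr rfl fun σ _ => ?_
  simp only [Nat.choose_zero_right, add_zero, Nat.cast_one, ← add_assoc]
  ring

def truncBinomial (n m j : ℕ) : ℤ :=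
  ∑ ℓ ∈ range n, ((m + n).choose ℓ : ℤ) * (j : ℤ) ^ ℓ

lemma truncBinomial_succ (n m j : ℕ) :
    truncBinomial (n + 1) m j
      = truncBinomial n (m + 1) j + ((n + m + 1).choose (m + 1) : ℤ) * (j : ℤ) ^ n := by
  rw [truncBinomial, sum_range_succ, truncBinomial, show m + (n + 1) = m + 1 + n by ring,
    show n + m + 1 = m + 1 + n by ring, Nat.choose_symm_add]

lemma add_one_pow_sub_pow_eq_truncBinomial (n j : ℕ) :
    ((j : ℤ) + 1) ^ n - (j : ℤ) ^ n = truncBinomial n 0 j := by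
  rw [add_pow, sum_range_succ, truncBinomial, zero_add]
  simp [mul_comm]

lemma X_mul_mk_add_one_pow_sub_pow {R : Type*} [CommRing R] (k : ℕ) :
    X * PowerSeries.mk (fun j : ℕ => ((j : R) + 1) ^ (k + 1) - (j : R) ^ (k + 1))
      = (1 - X) * PowerSeries.mk (fun j : ℕ => (j : R) ^ (k + 1)) := by
  ext (_ | j)
  · simp
  · simp [sub_mul, coeff_succ_X_mul]

lemma coeff_one_sub_X_pow {R : Type*} [CommRing R] (n k : ℕ) :
    coeff k ((1 - X : R⟦X⟧) ^ n) = (-1) ^ k * n.choose k := by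
  have h : (1 - X : R⟦X⟧) = rescale (-1) (1 + X) := by simp [sub_eq_add_neg]
  rw [h, ← map_pow, coeff_rescale, add_comm, ← Polynomial.coe_X, ← Polynomial.coe_one,
    ← Polynomial.coe_add, ← Polynomial.coe_pow, Polynomial.coeff_coe,
    Polynomial.coeff_X_add_one_pow]

noncomputable def truncBinomialSeries (n m : ℕ) : ℤ⟦X⟧ :=
  (1 - X) ^ n * PowerSeries.mk (truncBinomial n m)

lemma truncBinomialSeries_one (m : ℕ) : truncBinomialSeries 1 m = 1 := by
  have : truncBinomial 1 m = 1 := by ext j; simp [truncBinomial]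
  rw [truncBinomialSeries, this, pow_one, mul_comm, mk_one_mul_one_sub_eq_one]

lemma truncBinomialSeries_succ_succ (n m : ℕ) :
    truncBinomialSeries (n + 2) m
      = ((n + m + 2).choose (m + 1) : ℤ⟦X⟧) * X * truncBinomialSeries (n + 1) 0
        + (1 - X) * truncBinomialSeries (n + 1) (m + 1) := by
  have hmk : PowerSeries.mk (truncBinomial (n + 2) m)
      = PowerSeries.mk (truncBinomial (n + 1) (m + 1))
        + ((n + m + 2).choose (m + 1) : ℤ⟦X⟧)
          * PowerSeries.mk (fun j : ℕ => (j : ℤ) ^ (n + 1)) := by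
    ext j
    rw [← map_natCast (C (R := ℤ)), map_add, coeff_C_mul]
    simp only [coeff_mk, truncBinomial_succ]
    ring_nf
  have hX : X * PowerSeries.mk (truncBinomial (n + 1) 0)
      = (1 - X) * PowerSeries.mk (fun j : ℕ => (j : ℤ) ^ (n + 1)) := by
    rw [← funext (add_one_pow_sub_pow_eq_truncBinomial (n + 1))]
    exact X_mul_mk_add_one_pow_sub_pow n
  rw [truncBinomialSeries, truncBinomialSeries, truncBinomialSeries, hmk]
  linear_combination -(1 - X) ^ (n + 1) * ((n + m + 2).choose (m + 1) : ℤ⟦X⟧) * hX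

lemma descentSeries_eq_truncBinomialSeries (n m : ℕ) :
    descentSeries n m = truncBinomialSeries (n + 1) m := by
  induction n generalizing m with
  | zero => rw [descentSeries_zero, truncBinomialSeries_one]
  | succ n ih => rw [descentSeries_succ, ih, ih, truncBinomialSeries_succ_succ]

lemma coeff_truncBinomialSeries (n m d : ℕ) :
    coeff d (truncBinomialSeries n m)
      = ∑ j ∈ range (d + 1), (-1 : ℤ) ^ (d - j) * (n.choose (d - j) : ℤ) * truncBinomial n m j := by
  rw [truncBinomialSeries, mul_comm, coeff_mul, Nat.sum_antidiagonal_eq_sum_range_succ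
    (fun j i => coeff j (PowerSeries.mk (truncBinomial n m)) * coeff i ((1 - X : ℤ⟦X⟧) ^ n))]
  simp [coeff_one_sub_X_pow, mul_comm]

lemma coeff_descentSeries (n m d : ℕ) :
    coeff d (descentSeries n m)
      = ∑ π : Equiv.Perm (Fin (n + 1)) with descents (n + 1) π = d,
          ((((π 0 : Fin (n + 1)) : ℕ) + m).choose m : ℤ) := by
  have hterm (a e : ℕ) : coeff d ((a : ℤ⟦X⟧) * X ^ e) = if e = d then (a : ℤ) else 0 := by
    rw [← map_natCast (C (R := ℤ)), coeff_C_mul_X_pow]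
    exact if_congr eq_comm rfl rfl
  simp only [descentSeries, map_sum, hterm, sum_filter]

lemma A_succ_eq_card (n d k : ℕ) :
    A (n + 1) d k
      = #{π : Equiv.Perm (Fin (n + 1)) | descents (n + 1) π = d ∧ (π 0 : ℕ) + 1 = k} := by
  refine congr_arg card (filter_congr fun π _ => ?_)
  refine and_congr Nat.cast_inj ⟨?_, fun h => ⟨0, rfl, h⟩⟩
  rintro ⟨i, hi, h⟩
  rwa [show i = 0 from Fin.ext hi] at h

lemma sum_mul_A (n d : ℕ) (f : ℕ → ℤ) :
    ∑ k ∈ Icc 1 (n + 1), f k * A (n + 1) d k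
      = ∑ π : Equiv.Perm (Fin (n + 1)) with descents (n + 1) π = d, f ((π 0 : ℕ) + 1) := by
  have hmaps : ∀ π ∈ (univ.filter fun π : Equiv.Perm (Fin (n + 1)) => descents (n + 1) π = d),
      (π 0 : ℕ) + 1 ∈ Icc 1 (n + 1) := fun π _ => by simpa using (π 0).is_le
  rw [← sum_fiberwise_of_maps_to hmaps]
  refine sum_congr rfl fun k _ => ?_
  rw [sum_congr rfl fun π hπ => by rw [(mem_filter.mp hπ).2], sum_const, filter_filter,
    A_succ_eq_card, nsmul_eq_mul, mul_comm]

theorem stmt10_general (n : ℕ) (d : ℕ) (m : ℕ) :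
    ∑ k ∈ Finset.Icc 1 n, (∏ i ∈ Finset.range m, ((k : ℤ) + i)) * A n (d : ℤ) k
      = (Nat.factorial m : ℤ) *
        ∑ j ∈ Finset.range (d + 1),
          (-1 : ℤ) ^ (d - j) * (n.choose (d - j) : ℤ) *
            ∑ ℓ ∈ Finset.range n, ((m + n).choose ℓ : ℤ) * (j : ℤ) ^ ℓ := by
  cases n with
  | zero => simp
  | succ n =>
    have hrising (a : ℕ) :
        ∏ i ∈ range m, (((a + 1 : ℕ) : ℤ) + i) = m.factorial * ((a + m).choose m : ℤ) := by
      rw [← Nat.cast_mul, ← Nat.ascFactorial_eq_factorial_mul_choose,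
        Nat.ascFactorial_eq_prod_range]
      push_cast
      rfl
    calc _ = ∑ π : Equiv.Perm (Fin (n + 1)) with descents (n + 1) π = d,
              (m.factorial : ℤ) * ((((π 0 : Fin (n + 1)) : ℕ) + m).choose m : ℤ) := by
          simp only [sum_mul_A, hrising]
      _ = m.factorial * coeff d (truncBinomialSeries (n + 1) m) := by
          rw [← descentSeries_eq_truncBinomialSeries, coeff_descentSeries, mul_sum]
      _ = _ := by rw [coeff_truncBinomialSeries]; rfl

theorem stmt10 (n : ℕ) (hn : 1 ≤ n) (d : ℕ) (hd : d ≤ n - 1) (m : ℕ) (hm : 1 ≤ m) :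
    ∑ k ∈ Finset.Icc 1 n, (∏ i ∈ Finset.range m, ((k : ℤ) + i)) * A n (d : ℤ) k
      = (Nat.factorial m : ℤ) *
        ∑ j ∈ Finset.range (d + 1),
          (-1 : ℤ) ^ (d - j) * (n.choose (d - j) : ℤ) *
            ∑ ℓ ∈ Finset.range n, ((m + n).choose ℓ : ℤ) * (j : ℤ) ^ ℓ :=
  stmt10_general n d m
end
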